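/- Let m ≥ 2. The space of complex (m-1)×m matrices A with det(A^{(k)}) ≠ 0 for all k = 1, …, m-1 and det(Â^{(j)}) ≠ 0 for all j = 1, …, m-1, where Â is the (m-1)×(m-1) matrix obtained from A by deleting its first column (with the subspace topology from the space of (m-1)×m complex matrices), is homotopy equivalent to the (2m-2)-torus (S¹)^{2m-2}. -/

import Mathlib

/-!
The leading minors `det A^{(k)}` and `det Â^{(k)}` are affine in the entries `A_{k,k}` and
`A_{k,k+1}` respectively, with the nonzero slopes `det A^{(k-1)}` and `det Â^{(k-1)}`. Going down
the rows one can therefore solve for these two entries, so a point of the space depends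
continuously on, and is determined by, its `2(m-1)` nonzero minors together with its remaining
entries, which are free. Scaling the minors radially onto the unit circle and the free entries to
`0` deforms the space onto the torus of the phases of the minors.
-/

open Matrix

namespace Matrix

section UpdateEntry

variable {ι κ ι' κ' α : Type*} [DecidableEq ι] [DecidableEq κ] [DecidableEq ι'] [DecidableEq κ']

def updateEntry (M : Matrix ι κ α) (i : ι) (j : κ) (x : α) : Matrix ι κ α :=
  M.updateRow i (Function.update (M i) j x)

variable (M : Matrix ι κ α) (i : ι) (j : κ) (x : α)

theorem updateEntry_apply (i₁ : ι) (j₁ : κ) :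
    M.updateEntry i j x i₁ j₁ = if i₁ = i ∧ j₁ = j then x else M i₁ j₁ := by
  by_cases hi : i₁ = i
  · subst hi
    by_cases hj : j₁ = j <;> simp [updateEntry, hj]
  · simp [updateEntry, hi]

theorem updateEntry_apply_of_ne_row {i₁ : ι} (h : i₁ ≠ i) : M.updateEntry i j x i₁ = M i₁ :=
  updateRow_ne h

theorem updateEntry_self : M.updateEntry i j (M i j) = M := by
  ext i₁ j₁
  rw [updateEntry_apply]
  split_ifs with h
  · rw [h.1, h.2]
  · rfl

theorem submatrix_updateEntry {f : ι' → ι} {g : κ' → κ} (hf : f.Injective) (hg : g.Injective)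
    (a : ι') (b : κ') :
    (M.updateEntry (f a) (g b) x).submatrix f g = (M.submatrix f g).updateEntry a b x := by
  ext a₁ b₁
  simp [updateEntry_apply, hf.eq_iff, hg.eq_iff]

end UpdateEntry

section LeadingMinor

variable {R : Type*} [CommRing R] {n : ℕ}

theorem det_updateEntry_last {k : ℕ} (N : Matrix (Fin (k + 1)) (Fin (k + 1)) R) (x : R) :
    (N.updateEntry (Fin.last k) (Fin.last k) x).det =
      x * (N.submatrix Fin.castSucc Fin.castSucc).det +
        (N.updateEntry (Fin.last k) (Fin.last k) 0).det := by
  have hrow : Function.update (N (Fin.last k)) (Fin.last k) x =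
      Function.update (N (Fin.last k)) (Fin.last k) 0 + x • Pi.single (Fin.last k) 1 := by
    ext j
    by_cases hj : j = Fin.last k <;> simp [hj]
  rw [updateEntry, hrow, det_updateRow_add, det_updateRow_smul, ← adjugate_apply,
    adjugate_fin_succ_eq_det_submatrix, Fin.succAbove_last]
  simp [updateEntry, add_comm]

def leadingMinor (N : Matrix (Fin n) (Fin n) R) (k : ℕ) (hk : k ≤ n) : R :=
  (N.submatrix (Fin.castLE hk) (Fin.castLE hk)).det

theorem leadingMinor_zero (N : Matrix (Fin n) (Fin n) R) : N.leadingMinor 0 n.zero_le = 1 :=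
  det_isEmpty

theorem leadingMinor_congr {N N' : Matrix (Fin n) (Fin n) R} {k : ℕ} (hk : k ≤ n)
    (h : ∀ i j : Fin n, (i : ℕ) < k → (j : ℕ) < k → N i j = N' i j) :
    N.leadingMinor k hk = N'.leadingMinor k hk := by
  unfold leadingMinor
  congr 1
  ext i j
  exact h _ _ i.isLt j.isLt

theorem leadingMinor_updateEntry (N : Matrix (Fin n) (Fin n) R) (i : Fin n) (x : R) :
    (N.updateEntry i i x).leadingMinor (i + 1) i.isLt =
      x * N.leadingMinor i i.isLt.le + (N.updateEntry i i 0).leadingMinor (i + 1) i.isLt := by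
  have hi : Fin.castLE i.isLt (Fin.last i) = i := rfl
  have hinj : (Fin.castLE (n := (i : ℕ) + 1) i.isLt).Injective := Fin.castLE_injective _
  simp only [leadingMinor, ← hi, submatrix_updateEntry _ _ hinj hinj]
  rw [det_updateEntry_last]
  rfl

theorem leadingMinor_ne_zero [Nontrivial R] {N : Matrix (Fin n) (Fin n) R} {k : ℕ} (hk : k ≤ n)
    (h : ∀ i : Fin n, (i : ℕ) < k → N.leadingMinor (i + 1) i.isLt ≠ 0) :
    N.leadingMinor k hk ≠ 0 := by
  cases k with
  | zero => rw [leadingMinor_zero]; exact one_ne_zero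
  | succ k => exact h ⟨k, hk⟩ k.lt_succ_self

theorem forall_leadingMinor_ne_zero_iff {N : Matrix (Fin n) (Fin n) R} :
    (∀ k : ℕ, 1 ≤ k → ∀ hk : k ≤ n, N.leadingMinor k hk ≠ 0) ↔
      ∀ i : Fin n, N.leadingMinor (i + 1) i.isLt ≠ 0 := by
  refine ⟨fun h i => h _ (Nat.succ_pos _) _, fun h k hk₁ hk => ?_⟩
  obtain ⟨i, rfl⟩ : ∃ i, k = i + 1 := ⟨k - 1, by omega⟩
  exact h ⟨i, hk⟩

variable {m : ℕ}

theorem leadingMinor_submatrix_updateEntry (A : Matrix (Fin n) (Fin m) R)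
    {g : Fin n → Fin m} (hg : g.Injective) (i : Fin n) (x : R) :
    ((A.updateEntry i (g i) x).submatrix id g).leadingMinor (i + 1) i.isLt =
      x * (A.submatrix id g).leadingMinor i i.isLt.le +
        ((A.updateEntry i (g i) 0).submatrix id g).leadingMinor (i + 1) i.isLt := by
  have h := fun y => submatrix_updateEntry A y Function.injective_id hg i i
  simp only [id] at h
  rw [h, h, leadingMinor_updateEntry]

theorem leadingMinor_submatrix_congr_rows {A B : Matrix (Fin n) (Fin m) R} (g : Fin n → Fin m)
    {k : ℕ} (hk : k ≤ n) (h : ∀ i : Fin n, (i : ℕ) < k → A i = B i) :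
    (A.submatrix id g).leadingMinor k hk = (B.submatrix id g).leadingMinor k hk :=
  leadingMinor_congr hk fun i j hi _ => by simp [h i hi]

/-- `cornerMinors A i = det A^{(i+1)}`. -/
def cornerMinors (A : Matrix (Fin n) (Fin (n + 1)) R) (i : Fin n) : R :=
  (A.submatrix id Fin.castSucc).leadingMinor (i + 1) i.isLt

/-- `hatCornerMinors A i = det Â^{(i+1)}`. -/
def hatCornerMinors (A : Matrix (Fin n) (Fin (n + 1)) R) (i : Fin n) : R :=
  (A.submatrix id Fin.succ).leadingMinor (i + 1) i.isLt

theorem cornerMinors_updateEntry_succ (A : Matrix (Fin n) (Fin (n + 1)) R) (i : Fin n) (x : R) :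
    (A.updateEntry i i.succ x).cornerMinors i = A.cornerMinors i := by
  refine leadingMinor_congr _ fun r c _ hc => ?_
  simp only [submatrix_apply, id, updateEntry_apply, Fin.ext_iff, Fin.val_castSucc, Fin.val_succ]
  split_ifs
  · omega
  · rfl

end LeadingMinor

section SolveEntry

variable {ι κ K : Type*} [DecidableEq ι] [DecidableEq κ] [Field K]

/-- The `(i, j)` entry of `A` replaced by the value at which `μ`, affine in that entry with
slope `s`, takes the value `t`. -/
def solveEntry (μ : Matrix ι κ K → K) (s t : K) (A : Matrix ι κ K) (i : ι) (j : κ) :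
    Matrix ι κ K :=
  A.updateEntry i j ((t - μ (A.updateEntry i j 0)) / s)

variable {μ : Matrix ι κ K → K} {s : K} {A : Matrix ι κ K} {i : ι} {j : κ}

theorem solveEntry_apply_of_ne_row (t : K) {i₁ : ι} (h : i₁ ≠ i) :
    solveEntry μ s t A i j i₁ = A i₁ :=
  updateEntry_apply_of_ne_row _ _ _ _ h

theorem apply_solveEntry (hμ : ∀ x, μ (A.updateEntry i j x) = x * s + μ (A.updateEntry i j 0))
    (hs : s ≠ 0) (t : K) : μ (solveEntry μ s t A i j) = t := by
  rw [solveEntry, hμ]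
  field_simp
  ring

theorem solveEntry_apply_self
    (hμ : ∀ x, μ (A.updateEntry i j x) = x * s + μ (A.updateEntry i j 0)) (hs : s ≠ 0) :
    solveEntry μ s (μ A) A i j = A := by
  have hA : μ A = A i j * s + μ (A.updateEntry i j 0) := by
    rw [← hμ, updateEntry_self]
  rw [solveEntry, hA, add_sub_cancel_right, mul_div_cancel_right₀ _ hs, updateEntry_self]

end SolveEntry

section OfCornerMinors

variable {K : Type*} [Field K] {n : ℕ}

/-- Solve for the entry `(i, i)` of `A` so that `det A^{(i+1)} = d`, then for the entry `(i, i+1)`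
so that `det Â^{(i+1)} = e`. -/
def adjustRow (d e : K) (i : Fin n) (A : Matrix (Fin n) (Fin (n + 1)) K) :
    Matrix (Fin n) (Fin (n + 1)) K :=
  solveEntry (fun B => B.hatCornerMinors i) ((A.submatrix id Fin.succ).leadingMinor i i.isLt.le) e
    (solveEntry (fun B => B.cornerMinors i)
      ((A.submatrix id Fin.castSucc).leadingMinor i i.isLt.le) d A i i.castSucc) i i.succ

variable {d e : K} {i : Fin n} {A : Matrix (Fin n) (Fin (n + 1)) K}

theorem adjustRow_apply_of_ne {i₁ : Fin n} (h : i₁ ≠ i) : adjustRow d e i A i₁ = A i₁ := by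
  rw [adjustRow, solveEntry_apply_of_ne_row _ h, solveEntry_apply_of_ne_row _ h]

theorem leadingMinor_adjustRow_of_le (g : Fin n → Fin (n + 1)) {k : ℕ} (hk : k ≤ n)
    (hki : k ≤ i) :
    ((adjustRow d e i A).submatrix id g).leadingMinor k hk = (A.submatrix id g).leadingMinor k hk :=
  leadingMinor_submatrix_congr_rows g hk fun _ hi =>
    adjustRow_apply_of_ne (Fin.ne_of_lt (Nat.lt_of_lt_of_le hi hki))

theorem cornerMinors_adjustRow
    (h : (A.submatrix id Fin.castSucc).leadingMinor i i.isLt.le ≠ 0) :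
    (adjustRow d e i A).cornerMinors i = d := by
  rw [adjustRow, solveEntry, cornerMinors_updateEntry_succ]
  exact apply_solveEntry (μ := fun B => B.cornerMinors i)
    (leadingMinor_submatrix_updateEntry A (Fin.castSucc_injective n) i) h d

theorem hatCornerMinors_adjustRow
    (h : (A.submatrix id Fin.succ).leadingMinor i i.isLt.le ≠ 0) :
    (adjustRow d e i A).hatCornerMinors i = e := by
  set A₁ := solveEntry (fun B => B.cornerMinors i)
    ((A.submatrix id Fin.castSucc).leadingMinor i i.isLt.le) d A i i.castSucc
  have hslope : (A₁.submatrix id Fin.succ).leadingMinor i i.isLt.le =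
      (A.submatrix id Fin.succ).leadingMinor i i.isLt.le :=
    leadingMinor_submatrix_congr_rows Fin.succ i.isLt.le fun _ hi =>
      solveEntry_apply_of_ne_row d (Fin.ne_of_lt hi)
  refine apply_solveEntry (A := A₁) (μ := fun B => B.hatCornerMinors i) (fun x => ?_) h e
  exact hslope ▸ leadingMinor_submatrix_updateEntry A₁ (Fin.succ_injective n) i x

theorem adjustRow_cornerMinors_self
    (hL : (A.submatrix id Fin.castSucc).leadingMinor i i.isLt.le ≠ 0)
    (hR : (A.submatrix id Fin.succ).leadingMinor i i.isLt.le ≠ 0) :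
    adjustRow (A.cornerMinors i) (A.hatCornerMinors i) i A = A := by
  rw [adjustRow,
    solveEntry_apply_self (leadingMinor_submatrix_updateEntry A (Fin.castSucc_injective n) i) hL,
    solveEntry_apply_self (leadingMinor_submatrix_updateEntry A (Fin.succ_injective n) i) hR]

def adjustRows (d e : Fin n → K) (C : Matrix (Fin n) (Fin (n + 1)) K) :
    ℕ → Matrix (Fin n) (Fin (n + 1)) K
  | 0 => C
  | k + 1 =>
    if hk : k < n then adjustRow (d ⟨k, hk⟩) (e ⟨k, hk⟩) ⟨k, hk⟩ (adjustRows d e C k)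
    else adjustRows d e C k

/-- For nonzero `d` and `e`, the matrix with `det A^{(i+1)} = d i` and `det Â^{(i+1)} = e i` whose
entries other than `(i, i)` and `(i, i+1)` are those of `C`. -/
def ofCornerMinors (d e : Fin n → K) (C : Matrix (Fin n) (Fin (n + 1)) K) :
    Matrix (Fin n) (Fin (n + 1)) K :=
  adjustRows d e C n

variable {d e : Fin n → K} {C : Matrix (Fin n) (Fin (n + 1)) K}

theorem adjustRows_succ_of_lt {k : ℕ} (hk : k < n) :
    adjustRows d e C (k + 1) = adjustRow (d ⟨k, hk⟩) (e ⟨k, hk⟩) ⟨k, hk⟩ (adjustRows d e C k) :=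
  dif_pos hk

theorem adjustRows_succ_of_le {k : ℕ} (hk : n ≤ k) :
    adjustRows d e C (k + 1) = adjustRows d e C k :=
  dif_neg (Nat.not_lt.mpr hk)

theorem cornerMinors_adjustRows (hd : ∀ i, d i ≠ 0) (he : ∀ i, e i ≠ 0) (k : ℕ) (i : Fin n)
    (hi : (i : ℕ) < k) :
    (adjustRows d e C k).cornerMinors i = d i ∧ (adjustRows d e C k).hatCornerMinors i = e i := by
  induction k generalizing i with
  | zero => omega
  | succ k ih =>
    rcases Nat.lt_or_ge k n with hk | hk
    · rw [adjustRows_succ_of_lt hk]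
      rcases Nat.lt_succ_iff_lt_or_eq.mp hi with hik | rfl
      · exact ⟨(leadingMinor_adjustRow_of_le _ _ hik).trans (ih _ hik).1,
          (leadingMinor_adjustRow_of_le _ _ hik).trans (ih _ hik).2⟩
      · exact ⟨cornerMinors_adjustRow (leadingMinor_ne_zero _ fun j hj =>
            (ih _ hj).1.trans_ne (hd j)),
          hatCornerMinors_adjustRow (leadingMinor_ne_zero _ fun j hj =>
            (ih _ hj).2.trans_ne (he j))⟩
    · rw [adjustRows_succ_of_le hk]
      exact ih _ (by omega)

theorem cornerMinors_ofCornerMinors (hd : ∀ i, d i ≠ 0) (he : ∀ i, e i ≠ 0) :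
    (ofCornerMinors d e C).cornerMinors = d :=
  funext fun i => (cornerMinors_adjustRows hd he n i i.isLt).1

theorem hatCornerMinors_ofCornerMinors (hd : ∀ i, d i ≠ 0) (he : ∀ i, e i ≠ 0) :
    (ofCornerMinors d e C).hatCornerMinors = e :=
  funext fun i => (cornerMinors_adjustRows hd he n i i.isLt).2

theorem ofCornerMinors_cornerMinors {A : Matrix (Fin n) (Fin (n + 1)) K}
    (hL : ∀ i, A.cornerMinors i ≠ 0) (hR : ∀ i, A.hatCornerMinors i ≠ 0) :
    ofCornerMinors A.cornerMinors A.hatCornerMinors A = A := by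
  suffices h : ∀ k, adjustRows A.cornerMinors A.hatCornerMinors A k = A from h n
  intro k
  induction k with
  | zero => rfl
  | succ k ih =>
    rcases Nat.lt_or_ge k n with hk | hk
    · rw [adjustRows_succ_of_lt hk, ih]
      exact adjustRow_cornerMinors_self (leadingMinor_ne_zero _ fun j _ => hL j)
        (leadingMinor_ne_zero _ fun j _ => hR j)
    · rw [adjustRows_succ_of_le hk, ih]

end OfCornerMinors

end Matrix

section Continuity

variable {X : Type*} [TopologicalSpace X]

theorem Continuous.matrix_updateEntry {ι κ α : Type*} [DecidableEq ι] [DecidableEq κ]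
    [TopologicalSpace α] {A : X → Matrix ι κ α} {x : X → α} (hA : Continuous A)
    (hx : Continuous x) (i : ι) (j : κ) : Continuous fun p => (A p).updateEntry i j (x p) :=
  hA.matrix_updateRow i (((continuous_apply i).comp hA).update j hx)

theorem continuous_leadingMinor_submatrix {R : Type*} [CommRing R] [TopologicalSpace R]
    [IsTopologicalRing R] {n m : ℕ} (g : Fin n → Fin m) {k : ℕ} (hk : k ≤ n) :
    Continuous fun A : Matrix (Fin n) (Fin m) R => (A.submatrix id g).leadingMinor k hk :=
  (continuous_id.matrix_submatrix _ _).matrix_det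

variable {K : Type*} [Field K] [TopologicalSpace K] [IsTopologicalDivisionRing K]

theorem Continuous.matrix_solveEntry {ι κ : Type*} [DecidableEq ι] [DecidableEq κ]
    {μ : Matrix ι κ K → K} {s t : X → K} {A : X → Matrix ι κ K} (hμ : Continuous μ)
    (hs : Continuous s) (ht : Continuous t) (hA : Continuous A) (hs₀ : ∀ p, s p ≠ 0)
    (i : ι) (j : κ) : Continuous fun p => solveEntry μ (s p) (t p) (A p) i j :=
  hA.matrix_updateEntry
    ((ht.sub (hμ.comp (hA.matrix_updateEntry continuous_const i j))).div hs hs₀) i j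

variable {n : ℕ}

theorem Continuous.matrix_adjustRow {d e : X → K} {A : X → Matrix (Fin n) (Fin (n + 1)) K}
    (hd : Continuous d) (he : Continuous e) (hA : Continuous A) (i : Fin n)
    (hL : ∀ p, ((A p).submatrix id Fin.castSucc).leadingMinor i i.isLt.le ≠ 0)
    (hR : ∀ p, ((A p).submatrix id Fin.succ).leadingMinor i i.isLt.le ≠ 0) :
    Continuous fun p => adjustRow (d p) (e p) i (A p) :=
  Continuous.matrix_solveEntry (continuous_leadingMinor_submatrix _ _)
    ((continuous_leadingMinor_submatrix _ _).comp hA) he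
    (Continuous.matrix_solveEntry (continuous_leadingMinor_submatrix _ _)
      ((continuous_leadingMinor_submatrix _ _).comp hA) hd hA hL i i.castSucc) hR i i.succ

theorem Continuous.matrix_ofCornerMinors {d e : X → Fin n → K}
    {C : X → Matrix (Fin n) (Fin (n + 1)) K} (hd : Continuous d) (he : Continuous e)
    (hC : Continuous C) (hd₀ : ∀ p i, d p i ≠ 0) (he₀ : ∀ p i, e p i ≠ 0) :
    Continuous fun p => ofCornerMinors (d p) (e p) (C p) := by
  suffices h : ∀ k, Continuous fun p => adjustRows (d p) (e p) (C p) k from h n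
  intro k
  induction k with
  | zero => exact hC
  | succ k ih =>
    rcases Nat.lt_or_ge k n with hk | hk
    · simp only [adjustRows_succ_of_lt hk]
      refine ((continuous_apply _).comp hd).matrix_adjustRow ((continuous_apply _).comp he) ih _
        (fun p => leadingMinor_ne_zero _ fun j hj => ?_)
        (fun p => leadingMinor_ne_zero _ fun j hj => ?_)
      · exact (cornerMinors_adjustRows (hd₀ p) (he₀ p) k j hj).1.trans_ne (hd₀ p j)
      · exact (cornerMinors_adjustRows (hd₀ p) (he₀ p) k j hj).2.trans_ne (he₀ p j)
    · simpa only [adjustRows_succ_of_le hk] using ih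

end Continuity

noncomputable section

def radialScale (t : ℝ) (z : ℂ) : ℂ :=
  z * ((‖z‖ ^ (t - 1) : ℝ) : ℂ)

theorem radialScale_ne_zero (t : ℝ) {z : ℂ} (hz : z ≠ 0) : radialScale t z ≠ 0 :=
  mul_ne_zero hz (Complex.ofReal_ne_zero.mpr (Real.rpow_pos_of_pos (norm_pos_iff.mpr hz) _).ne')

theorem radialScale_one (z : ℂ) : radialScale 1 z = z := by
  simp [radialScale]

theorem radialScale_zero (z : ℂ) : radialScale 0 z = z / ‖z‖ := by
  simp [radialScale, div_eq_mul_inv, Real.rpow_neg_one]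

theorem norm_radialScale_zero {z : ℂ} (hz : z ≠ 0) : ‖radialScale 0 z‖ = 1 := by
  simp [radialScale_zero, hz]

theorem Continuous.radialScale {X : Type*} [TopologicalSpace X] {t : X → ℝ} {u : X → ℂ}
    (ht : Continuous t) (hu : Continuous u) (hu₀ : ∀ x, u x ≠ 0) :
    Continuous fun x => radialScale (t x) (u x) :=
  hu.mul (Complex.continuous_ofReal.comp
    (hu.norm.rpow (ht.sub continuous_const) fun x => .inl (norm_ne_zero_iff.mpr (hu₀ x))))

/-- The space of the theorem for `m = n + 1`; dropping the last column does not change `A^{(k)}`. -/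
abbrev CornerMinorSpace (n : ℕ) : Type :=
  {A : Matrix (Fin n) (Fin (n + 1)) ℂ //
    (∀ k : ℕ, 1 ≤ k → ∀ hk : k ≤ n, (A.submatrix id Fin.castSucc).leadingMinor k hk ≠ 0) ∧
    (∀ k : ℕ, 1 ≤ k → ∀ hk : k ≤ n, (A.submatrix id Fin.succ).leadingMinor k hk ≠ 0)}

namespace CornerMinorSpace

variable {n : ℕ}

def minors (A : CornerMinorSpace n) : Fin n ⊕ Fin n → ℂ :=
  Sum.elim A.1.cornerMinors A.1.hatCornerMinors

theorem minors_ne_zero (A : CornerMinorSpace n) : ∀ s, A.minors s ≠ 0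
  | .inl i => forall_leadingMinor_ne_zero_iff.mp A.2.1 i
  | .inr i => forall_leadingMinor_ne_zero_iff.mp A.2.2 i

theorem continuous_minors : Continuous (minors (n := n)) :=
  continuous_pi fun
    | .inl _ => (continuous_leadingMinor_submatrix _ _).comp continuous_subtype_val
    | .inr _ => (continuous_leadingMinor_submatrix _ _).comp continuous_subtype_val

def ofMinors (f : Fin n ⊕ Fin n → ℂ) (C : Matrix (Fin n) (Fin (n + 1)) ℂ) (hf : ∀ s, f s ≠ 0) :
    CornerMinorSpace n :=
  ⟨ofCornerMinors (f ∘ .inl) (f ∘ .inr) C,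
    forall_leadingMinor_ne_zero_iff.mpr fun i =>
      (congrFun (cornerMinors_ofCornerMinors (C := C) (fun _ => hf _) (fun _ => hf _)) i).trans_ne
        (hf _),
    forall_leadingMinor_ne_zero_iff.mpr fun i =>
      (congrFun (hatCornerMinors_ofCornerMinors (C := C) (fun _ => hf _) (fun _ => hf _))
        i).trans_ne (hf _)⟩

theorem minors_ofMinors (f : Fin n ⊕ Fin n → ℂ) (C : Matrix (Fin n) (Fin (n + 1)) ℂ)
    (hf : ∀ s, f s ≠ 0) : (ofMinors f C hf).minors = f := by
  funext s
  cases s with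
  | inl i => exact congrFun (cornerMinors_ofCornerMinors (fun _ => hf _) (fun _ => hf _)) i
  | inr i => exact congrFun (hatCornerMinors_ofCornerMinors (fun _ => hf _) (fun _ => hf _)) i

theorem ofMinors_minors (A : CornerMinorSpace n) : ofMinors A.minors A.1 A.minors_ne_zero = A :=
  Subtype.ext (ofCornerMinors_cornerMinors (fun i => A.minors_ne_zero (.inl i))
    (fun i => A.minors_ne_zero (.inr i)))

theorem continuous_ofMinors {X : Type*} [TopologicalSpace X] {f : X → Fin n ⊕ Fin n → ℂ}
    {C : X → Matrix (Fin n) (Fin (n + 1)) ℂ} (hf : Continuous f) (hC : Continuous C)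
    (hf₀ : ∀ x s, f x s ≠ 0) : Continuous fun x => ofMinors (f x) (C x) (hf₀ x) :=
  (Continuous.matrix_ofCornerMinors (d := fun x => f x ∘ .inl) (e := fun x => f x ∘ .inr)
    (continuous_pi fun _ => (continuous_apply _).comp hf)
    (continuous_pi fun _ => (continuous_apply _).comp hf) hC
    (fun x _ => hf₀ x _) (fun x _ => hf₀ x _)).subtype_mk _

def toTorus : C(CornerMinorSpace n, Fin n ⊕ Fin n → Metric.sphere (0 : ℂ) 1) where
  toFun A s := ⟨radialScale 0 (A.minors s),
    mem_sphere_zero_iff_norm.mpr (norm_radialScale_zero (A.minors_ne_zero s))⟩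
  continuous_toFun := continuous_pi fun s =>
    (continuous_const.radialScale ((continuous_apply s).comp continuous_minors)
      fun A => A.minors_ne_zero s).subtype_mk _

def ofTorus : C(Fin n ⊕ Fin n → Metric.sphere (0 : ℂ) 1, CornerMinorSpace n) where
  toFun z := ofMinors (fun s => z s) 0 fun s => ne_zero_of_mem_unit_sphere (z s)
  continuous_toFun := continuous_ofMinors
    (continuous_pi fun s => continuous_subtype_val.comp (continuous_apply s)) continuous_const _

theorem toTorus_ofTorus (z : Fin n ⊕ Fin n → Metric.sphere (0 : ℂ) 1) :
    toTorus (ofTorus z) = z := by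
  funext s
  apply Subtype.ext
  change radialScale 0 ((ofMinors (fun s => (z s : ℂ)) 0
    fun s => ne_zero_of_mem_unit_sphere (z s)).minors s) = z s
  rw [minors_ofMinors, radialScale_zero, norm_eq_of_mem_sphere, Complex.ofReal_one, div_one]

def homotopyOfTorusCompToTorus :
    ContinuousMap.Homotopy (ofTorus.comp toTorus) (ContinuousMap.id (CornerMinorSpace n)) where
  toFun p := ofMinors (fun s => radialScale p.1 (p.2.minors s)) ((p.1 : ℝ) • p.2.1)
    fun s => radialScale_ne_zero _ (p.2.minors_ne_zero s)
  continuous_toFun := continuous_ofMinors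
    (continuous_pi fun s => (continuous_subtype_val.comp continuous_fst).radialScale
      (((continuous_apply s).comp continuous_minors).comp continuous_snd)
      fun p => p.2.minors_ne_zero s)
    ((continuous_subtype_val.comp continuous_fst).smul
      (continuous_subtype_val.comp continuous_snd)) _
  map_zero_left A := by
    simp only [Set.Icc.coe_zero, zero_smul]
    rfl
  map_one_left A := by
    simp only [Set.Icc.coe_one, one_smul, radialScale_one]
    exact ofMinors_minors A

def homotopyEquivTorus :
    ContinuousMap.HomotopyEquiv (CornerMinorSpace n) (Fin n ⊕ Fin n → Metric.sphere (0 : ℂ) 1)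
    where
  toFun := toTorus
  invFun := ofTorus
  left_inv := ⟨homotopyOfTorusCompToTorus⟩
  right_inv := by
    rw [show toTorus.comp ofTorus = ContinuousMap.id _ from ContinuousMap.ext toTorus_ofTorus]

end CornerMinorSpace

end

/-- The space of complex `(m-1) × m` matrices `A` with `det (A^(k)) ≠ 0` for
`k = 1, …, m - 1` and `det (Â^(j)) ≠ 0` for `j = 1, …, m - 1` (where `Â` deletes the
first column of `A`) is homotopy equivalent to the `(2m-2)`-torus `(S¹)^(2m-2)`. -/
theorem modified_cholesky_rectangular_complement_homotopy_torus (m : ℕ) (hm : 2 ≤ m) :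
    Nonempty (ContinuousMap.HomotopyEquiv
      {A : Matrix (Fin (m - 1)) (Fin m) ℂ //
        (∀ k : ℕ, 1 ≤ k → ∀ hk : k ≤ m - 1,
          (A.submatrix (Fin.castLE hk) (Fin.castLE (show k ≤ m by omega))).det ≠ 0) ∧
        (∀ j : ℕ, 1 ≤ j → ∀ hj : j ≤ m - 1,
          (Matrix.of fun a b : Fin j =>
            A (Fin.castLE hj a) ⟨(b : ℕ) + 1, by have := b.isLt; omega⟩).det ≠ 0)}
      (Fin (2 * m - 2) → Metric.sphere (0 : ℂ) 1)) := by
  obtain ⟨n, rfl⟩ : ∃ n, m = n + 1 := ⟨m - 1, by omega⟩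
  exact ⟨(CornerMinorSpace.homotopyEquivTorus (n := n)).trans
    (Homeomorph.piCongrLeft (Y := fun _ => Metric.sphere (0 : ℂ) 1)
      (finSumFinEquiv.trans (finCongr (by omega)))).toHomotopyEquiv⟩
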